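/- Let d ≥ 1 and let j : (0,∞) → [0,∞) be nonincreasing with ∫_{ℝ^d} min{1,|x|²} j(|x|) dx < ∞, and suppose there exist δ ∈ (0,1) and 0 < c₁ ≤ c₂ with c₁·r^{−d−2}·(log(1/r))^{−2} ≤ j(r) ≤ c₂·r^{−d−2}·(log(1/r))^{−2} for all r ∈ (0, δ]. Then there exist constants 0 < a₁ ≤ a₂, 0 < b₁ ≤ b₂ and r₀ ∈ (0, δ) such that for all r ∈ (0, r₀]: a₁·(log(1/r))^{−1} ≤ m₂(r) ≤ a₂·(log(1/r))^{−1} and b₁·r^{−2}·(log(1/r))^{−2} ≤ λ(r) ≤ b₂·r^{−2}·(log(1/r))^{−2}. -/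

import Mathlib

open MeasureTheory Metric ENNReal

/-- Truncated second moment `m₂(r) = ∫_{B(0,r)} |x|² j(|x|) dx` in `ℝ^d`. -/
noncomputable def m2 (d : ℕ) (j : ℝ → ℝ) (r : ℝ) : ℝ≥0∞ :=
  ∫⁻ x in Metric.ball (0 : EuclideanSpace ℝ (Fin d)) r,
    ENNReal.ofReal (‖x‖ ^ 2 * j ‖x‖)

/-- Tail `λ(r) = ∫_{ℝ^d ∖ B(0,r)} j(|x|) dx` in `ℝ^d`. -/
noncomputable def tailLam (d : ℕ) (j : ℝ → ℝ) (r : ℝ) : ℝ≥0∞ :=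
  ∫⁻ x in (Metric.ball (0 : EuclideanSpace ℝ (Fin d)) r)ᶜ,
    ENNReal.ofReal (j ‖x‖)


/-!
In polar coordinates both quantities become integrals against `y ^ (d - 1) dy`, and on `(0, δ]`
the bounds on `j` pin the radial densities between multiples of `1 / (y log² y)` (for `m₂`) and
`1 / (y³ log² y)` (for `λ`). The first has the antiderivative `-1 / log y`, which vanishes at `0`,
so `m₂(r) ≍ 1 / log (1 / r)`. For `λ(r)`, the part of the tail outside a fixed ball `B(0, ρ)` is
bounded by the Lévy–Khintchine integral; inside it, `1 / (y³ log² y)` is dominated by the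
derivative of `-(y log y)⁻²` once `log y ≤ -2`, and is at least `1 / ((2r)³ log² r)` on the shell
`r ≤ |x| < 2r`. Together these give `λ(r) ≍ r⁻² log⁻² (1 / r)`.
-/

open Set Module

section Polar

variable {E : Type*} [NormedAddCommGroup E] [NormedSpace ℝ E] [FiniteDimensional ℝ E]
  [MeasurableSpace E] [BorelSpace E] [Nontrivial E] (μ : Measure E) [μ.IsAddHaarMeasure]

theorem lintegral_fun_norm_addHaar {f : ℝ → ℝ≥0∞} (hf : Measurable f) :
    ∫⁻ x, f ‖x‖ ∂μ = finrank ℝ E * μ (ball 0 1) *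
      ∫⁻ y in Ioi (0 : ℝ), ENNReal.ofReal (y ^ (finrank ℝ E - 1)) * f y := by
  have hf_snd : Measurable fun p : sphere (0 : E) 1 × Ioi (0 : ℝ) ↦ f p.2 := by fun_prop
  calc
    ∫⁻ x, f ‖x‖ ∂μ = ∫⁻ x : ({(0 : E)}ᶜ : Set E), f ‖x.1‖ ∂(μ.comap (↑)) := by
      rw [lintegral_subtype_comap (measurableSet_singleton _).compl (fun x : E ↦ f ‖x‖),
        restrict_compl_singleton]
    _ = ∫⁻ p : sphere (0 : E) 1 × Ioi (0 : ℝ), f p.2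
        ∂(μ.toSphere.prod (.volumeIoiPow (finrank ℝ E - 1))) := by
      rw [← μ.measurePreserving_homeomorphUnitSphereProd.map_eq,
        lintegral_map hf_snd (Homeomorph.measurable _)]
      simp
    _ = μ.toSphere univ * ∫⁻ y : Ioi (0 : ℝ), f y ∂(.volumeIoiPow (finrank ℝ E - 1)) := by
      rw [lintegral_prod _ hf_snd.aemeasurable]
      simp [lintegral_const, mul_comm]
    _ = _ := by
      rw [Measure.toSphere_apply_univ, Measure.volumeIoiPow,
        lintegral_withDensity_eq_lintegral_mul _
          (measurable_subtype_coe.pow_const _).ennreal_ofReal (by fun_prop),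
        ← lintegral_subtype_comap measurableSet_Ioi]
      rfl

theorem setLIntegral_fun_norm_preimage_addHaar {f : ℝ → ℝ≥0∞} (hf : Measurable f) {s : Set ℝ}
    (hs : MeasurableSet s) :
    ∫⁻ x in (‖·‖) ⁻¹' s, f ‖x‖ ∂μ = finrank ℝ E * μ (ball 0 1) *
      ∫⁻ y in s ∩ Ioi 0, ENNReal.ofReal (y ^ (finrank ℝ E - 1)) * f y := by
  have hcomp (x : E) : ((‖·‖) ⁻¹' s).indicator (fun x ↦ f ‖x‖) x = s.indicator f ‖x‖ :=
    indicator_comp_right norm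
  rw [← lintegral_indicator (measurable_norm hs), lintegral_congr hcomp,
    lintegral_fun_norm_addHaar μ (hf.indicator hs)]
  simp_rw [← indicator_mul_right s (fun y ↦ ENNReal.ofReal (y ^ (finrank ℝ E - 1))) f]
  rw [lintegral_indicator hs, Measure.restrict_restrict hs]

end Polar

theorem setLIntegral_compl_ball_le_lintegral_min {E : Type*} [NormedAddCommGroup E]
    [MeasurableSpace E] [OpensMeasurableSpace E] (μ : Measure E) (j : ℝ → ℝ) {ρ : ℝ}
    (hρ : 0 < ρ) :
    ∫⁻ x in (ball 0 ρ)ᶜ, ENNReal.ofReal (j ‖x‖) ∂μ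
      ≤ ENNReal.ofReal (min 1 (ρ ^ 2))⁻¹ *
        ∫⁻ x, ENNReal.ofReal (min 1 (‖x‖ ^ 2) * j ‖x‖) ∂μ := by
  rw [← lintegral_const_mul' _ _ ENNReal.ofReal_ne_top]
  refine (setLIntegral_mono' measurableSet_ball.compl fun x hx ↦ ?_).trans
    (setLIntegral_le_lintegral _ _)
  have hρx : ρ ≤ ‖x‖ := by simpa using hx
  have hone : 1 ≤ (min 1 (ρ ^ 2))⁻¹ * min 1 (‖x‖ ^ 2) :=
    (one_le_inv_mul₀ (by positivity)).2 (min_le_min_left _ (pow_le_pow_left₀ hρ.le hρx 2))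
  calc ENNReal.ofReal (j ‖x‖)
      ≤ ENNReal.ofReal ((min 1 (ρ ^ 2))⁻¹ * min 1 (‖x‖ ^ 2)) * ENNReal.ofReal (j ‖x‖) :=
        le_mul_of_one_le_left' (ENNReal.one_le_ofReal.2 hone)
    _ = _ := by
        rw [ENNReal.ofReal_mul (by positivity), ENNReal.ofReal_mul (by positivity), mul_assoc]

theorem lintegral_Ioc_eq_ofReal_sub_of_hasDerivAt {F f : ℝ → ℝ} {a b : ℝ} (hab : a ≤ b)
    (hcont : ContinuousOn F (Icc a b)) (hderiv : ∀ x ∈ Ioo a b, HasDerivAt F (f x) x)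
    (hf : ∀ x ∈ Ioo a b, 0 ≤ f x) :
    ∫⁻ x in Ioc a b, ENNReal.ofReal (f x) = ENNReal.ofReal (F b - F a) := by
  have hint := intervalIntegral.integrableOn_deriv_of_nonneg hcont hderiv hf
  have hf_ae : 0 ≤ᵐ[volume.restrict (Ioc a b)] f := by
    rw [← Measure.restrict_congr_set Ioo_ae_eq_Ioc]
    exact ae_restrict_of_forall_mem measurableSet_Ioo hf
  rw [← ofReal_integral_eq_lintegral_ofReal hint hf_ae, ← intervalIntegral.integral_of_le hab,
    intervalIntegral.integral_eq_sub_of_hasDerivAt_of_le hab hcont hderiv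
      ((intervalIntegrable_iff_integrableOn_Ioc_of_le hab).2 hint)]

theorem hasDerivAt_neg_inv_log {y : ℝ} (hy : 0 < y) (hlog : Real.log y ≠ 0) :
    HasDerivAt (fun t ↦ -(Real.log t)⁻¹) ((y * Real.log y ^ 2)⁻¹) y := by
  refine ((Real.hasDerivAt_log hy.ne').inv hlog).neg.congr_deriv ?_
  field_simp

-- Because `Real.log 0 = 0`, the function `-(Real.log t)⁻¹` takes the value `0` at `0`.
theorem continuousWithinAt_neg_inv_log_zero :
    ContinuousWithinAt (fun t ↦ -(Real.log t)⁻¹) (Ici 0) 0 := by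
  rw [← continuousWithinAt_Ioi_iff_Ici]
  simpa [ContinuousWithinAt] using
    (tendsto_inv_atBot_zero.comp Real.tendsto_log_nhdsGT_zero).neg

theorem lintegral_Ioc_zero_inv_mul_log_sq {r : ℝ} (hr0 : 0 ≤ r) (hr1 : r < 1) :
    ∫⁻ y in Ioc 0 r, ENNReal.ofReal ((y * Real.log y ^ 2)⁻¹)
      = ENNReal.ofReal (-(Real.log r)⁻¹) := by
  have hlog {y : ℝ} (hy : y ∈ Ioc 0 r) : Real.log y ≠ 0 :=
    (Real.log_neg hy.1 (hy.2.trans_lt hr1)).ne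
  have hcont : ContinuousOn (fun t ↦ -(Real.log t)⁻¹) (Icc 0 r) := by
    intro y hy
    rcases hy.1.eq_or_lt with rfl | hy0
    · exact continuousWithinAt_neg_inv_log_zero.mono Icc_subset_Ici_self
    · exact (hasDerivAt_neg_inv_log hy0 (hlog ⟨hy0, hy.2⟩)).continuousAt.continuousWithinAt
  rw [lintegral_Ioc_eq_ofReal_sub_of_hasDerivAt hr0 hcont
    (fun y hy ↦ hasDerivAt_neg_inv_log hy.1 (hlog (Ioo_subset_Ioc_self hy)))
    (fun y hy ↦ by have := hy.1; positivity)]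
  simp

theorem hasDerivAt_neg_inv_mul_log_sq {y : ℝ} (hy : 0 < y) (hlog : Real.log y ≠ 0) :
    HasDerivAt (fun t ↦ -((t * Real.log t) ^ 2)⁻¹)
      (2 * (Real.log y + 1) / (y * Real.log y) ^ 3) y := by
  refine (((Real.hasDerivAt_mul_log hy.ne').fun_pow 2).inv
    (pow_ne_zero 2 (mul_ne_zero hy.ne' hlog))).neg.congr_deriv ?_
  field_simp
  ring

theorem lintegral_Ioc_inv_pow_three_mul_log_sq_le {r b : ℝ} (hr : 0 < r) (hrb : r ≤ b)
    (hb : b ≤ Real.exp (-2)) :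
    ∫⁻ y in Ioc r b, ENNReal.ofReal ((y ^ 3 * Real.log y ^ 2)⁻¹)
      ≤ ENNReal.ofReal (((r * Real.log r) ^ 2)⁻¹) := by
  have hlog {y : ℝ} (hy : y ∈ Icc r b) : Real.log y ≤ -2 := by
    rw [← Real.log_exp (-2)]
    exact Real.log_le_log (hr.trans_le hy.1) (hy.2.trans hb)
  have hderiv {y : ℝ} (hy : y ∈ Icc r b) :=
    hasDerivAt_neg_inv_mul_log_sq (hr.trans_le hy.1) (by linarith [hlog hy])
  have hle {y : ℝ} (hy : y ∈ Icc r b) :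
      (y ^ 3 * Real.log y ^ 2)⁻¹ ≤ 2 * (Real.log y + 1) / (y * Real.log y) ^ 3 := by
    have hy0 : 0 < y := hr.trans_le hy.1
    have hl := hlog hy
    have hdiff : 2 * (Real.log y + 1) / (y * Real.log y) ^ 3 - (y ^ 3 * Real.log y ^ 2)⁻¹
        = (Real.log y + 2) / (y ^ 3 * Real.log y ^ 3) := by
      field_simp [show Real.log y ≠ 0 by linarith]
      ring
    have : 0 ≤ (Real.log y + 2) / (y ^ 3 * Real.log y ^ 3) :=
      div_nonneg_of_nonpos (by linarith) (mul_nonpos_of_nonneg_of_nonpos (by positivity)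
        (Odd.pow_nonpos (by decide) (by linarith)))
    linarith
  have hGb : 0 ≤ ((b * Real.log b) ^ 2)⁻¹ := by positivity
  calc ∫⁻ y in Ioc r b, ENNReal.ofReal ((y ^ 3 * Real.log y ^ 2)⁻¹)
      ≤ ∫⁻ y in Ioc r b, ENNReal.ofReal (2 * (Real.log y + 1) / (y * Real.log y) ^ 3) :=
        setLIntegral_mono' measurableSet_Ioc fun y hy ↦
          ENNReal.ofReal_le_ofReal (hle (Ioc_subset_Icc_self hy))
    _ = ENNReal.ofReal (-((b * Real.log b) ^ 2)⁻¹ - -((r * Real.log r) ^ 2)⁻¹) :=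
        lintegral_Ioc_eq_ofReal_sub_of_hasDerivAt hrb
          (fun y hy ↦ (hderiv hy).continuousAt.continuousWithinAt)
          (fun y hy ↦ hderiv (Ioo_subset_Icc_self hy))
          (fun y hy ↦ (inv_nonneg.2 (by have := hr.trans hy.1; positivity)).trans
            (hle (Ioo_subset_Icc_self hy)))
    _ ≤ ENNReal.ofReal (((r * Real.log r) ^ 2)⁻¹) := ENNReal.ofReal_le_ofReal (by linarith)

theorem le_lintegral_Ioc_inv_pow_three_mul_log_sq {r : ℝ} (hr : 0 < r) (hr1 : 2 * r < 1) :
    ENNReal.ofReal (((2 * r) ^ 3 * Real.log r ^ 2)⁻¹ * r)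
      ≤ ∫⁻ y in Ioc r (2 * r), ENNReal.ofReal ((y ^ 3 * Real.log y ^ 2)⁻¹) := by
  have hle {y : ℝ} (hy : y ∈ Ioc r (2 * r)) :
      ((2 * r) ^ 3 * Real.log r ^ 2)⁻¹ ≤ (y ^ 3 * Real.log y ^ 2)⁻¹ := by
    have hy0 : 0 < y := hr.trans hy.1
    have hlogy : Real.log y < 0 := Real.log_neg hy0 (hy.2.trans_lt hr1)
    have hlog : Real.log r ≤ Real.log y := Real.log_le_log hr hy.1.le
    have : Real.log y ^ 2 ≤ Real.log r ^ 2 := by nlinarith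
    gcongr
    · have := hlogy.ne
      positivity
    · exact hy.2
  calc ENNReal.ofReal (((2 * r) ^ 3 * Real.log r ^ 2)⁻¹ * r)
      = ∫⁻ _ in Ioc r (2 * r), ENNReal.ofReal (((2 * r) ^ 3 * Real.log r ^ 2)⁻¹) := by
        rw [setLIntegral_const, Real.volume_Ioc, ← ENNReal.ofReal_mul (by positivity)]
        ring_nf
    _ ≤ _ := setLIntegral_mono' measurableSet_Ioc fun y hy ↦ ENNReal.ofReal_le_ofReal (hle hy)

theorem one_le_inv_sq_mul_inv_log_sq {r : ℝ} (hr0 : 0 < r) (hr1 : r < 1) :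
    1 ≤ (r ^ 2)⁻¹ * (Real.log (1 / r) ^ 2)⁻¹ := by
  have hlog : 0 < Real.log (1 / r) :=
    Real.log_pos (by rw [one_div]; exact (one_lt_inv₀ hr0).2 hr1)
  have hle : r * Real.log (1 / r) ≤ 1 := by
    have := Real.log_le_sub_one_of_pos (one_div_pos.2 hr0)
    calc r * Real.log (1 / r) ≤ r * (1 / r - 1) := by gcongr
      _ ≤ 1 := by rw [mul_sub, mul_one_div_cancel hr0.ne']; linarith
  rw [← mul_inv, ← mul_pow]
  exact (one_le_inv₀ (by positivity)).2 (pow_le_one₀ (by positivity) hle)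

noncomputable def unitSphereArea (d : ℕ) : ℝ≥0∞ :=
  d * volume (ball (0 : EuclideanSpace ℝ (Fin d)) 1)

noncomputable def logProfile (d : ℕ) (c t : ℝ) : ℝ :=
  c * (t ^ (d + 2))⁻¹ * (Real.log (1 / t) ^ 2)⁻¹

@[fun_prop]
theorem measurable_logProfile (d : ℕ) (c : ℝ) : Measurable (logProfile d c) := by
  unfold logProfile
  fun_prop

section Radial

variable {d : ℕ}

theorem unitSphereArea_ne_top : unitSphereArea d ≠ ⊤ :=
  ENNReal.mul_ne_top (ENNReal.natCast_ne_top _) measure_ball_lt_top.ne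

theorem unitSphereArea_ne_zero (hd : 1 ≤ d) : unitSphereArea d ≠ 0 :=
  mul_ne_zero (by exact_mod_cast (by omega : d ≠ 0)) (measure_ball_pos _ _ one_pos).ne'

theorem setLIntegral_norm_preimage_euclideanSpace (hd : 1 ≤ d) {f : ℝ → ℝ≥0∞}
    (hf : Measurable f) {s : Set ℝ} (hs : MeasurableSet s) :
    ∫⁻ x in ((‖·‖) ⁻¹' s : Set (EuclideanSpace ℝ (Fin d))), f ‖x‖
      = unitSphereArea d * ∫⁻ y in s ∩ Ioi 0, ENNReal.ofReal (y ^ (d - 1)) * f y := by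
  have : Nontrivial (EuclideanSpace ℝ (Fin d)) :=
    Module.nontrivial_of_finrank_pos (R := ℝ) (by rw [finrank_euclideanSpace_fin]; omega)
  simpa [unitSphereArea] using
    setLIntegral_fun_norm_preimage_addHaar (E := EuclideanSpace ℝ (Fin d)) volume hf hs

theorem pow_mul_logProfile (hd : 1 ≤ d) (c : ℝ) {y : ℝ} (hy : 0 < y) :
    y ^ (d - 1) * logProfile d c y = c * (y ^ 3 * Real.log y ^ 2)⁻¹ := by
  obtain ⟨e, rfl⟩ : ∃ e, d = e + 1 := ⟨d - 1, by omega⟩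
  rw [logProfile, one_div, Real.log_inv, neg_sq, Nat.add_sub_cancel, mul_inv]
  field_simp
  ring

theorem m2_mono {j k : ℝ → ℝ} {r : ℝ} (h : ∀ t ∈ Ioo 0 r, j t ≤ k t) :
    m2 d j r ≤ m2 d k r := by
  refine setLIntegral_mono' measurableSet_ball fun x hx ↦ ENNReal.ofReal_le_ofReal ?_
  rcases (norm_nonneg x).eq_or_lt with h0 | h0
  · simp [← h0]
  · exact mul_le_mul_of_nonneg_left (h _ ⟨h0, mem_ball_zero_iff.1 hx⟩) (sq_nonneg _)

theorem m2_logProfile (hd : 1 ≤ d) {c r : ℝ} (hc : 0 ≤ c) (hr0 : 0 < r) (hr1 : r < 1) :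
    m2 d (logProfile d c) r
      = unitSphereArea d * ENNReal.ofReal (c * (Real.log (1 / r))⁻¹) := by
  have hball : ball (0 : EuclideanSpace ℝ (Fin d)) r = (‖·‖) ⁻¹' Iio r := by ext; simp
  have hdensity : EqOn
      (fun y ↦ ENNReal.ofReal (y ^ (d - 1)) * ENNReal.ofReal (y ^ 2 * logProfile d c y))
      (fun y ↦ ENNReal.ofReal c * ENNReal.ofReal ((y * Real.log y ^ 2)⁻¹)) (Ioo 0 r) := by
    intro y hy
    have hy0 := hy.1
    dsimp only
    rw [← ENNReal.ofReal_mul (by positivity), ← ENNReal.ofReal_mul hc, mul_left_comm,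
      pow_mul_logProfile hd c hy0]
    field_simp
  rw [m2, hball, setLIntegral_norm_preimage_euclideanSpace hd
      (f := fun t ↦ ENNReal.ofReal (t ^ 2 * logProfile d c t)) (by fun_prop) measurableSet_Iio,
    Iio_inter_Ioi, setLIntegral_congr_fun measurableSet_Ioo hdensity,
    lintegral_const_mul _ (by fun_prop), Measure.restrict_congr_set Ioo_ae_eq_Ioc,
    lintegral_Ioc_zero_inv_mul_log_sq hr0.le hr1, ← ENNReal.ofReal_mul hc, one_div,
    Real.log_inv, inv_neg]

theorem le_m2 (hd : 1 ≤ d) {j : ℝ → ℝ} {c r : ℝ} (hc : 0 ≤ c) (hr0 : 0 < r) (hr1 : r < 1)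
    (hj : ∀ t ∈ Ioo 0 r, logProfile d c t ≤ j t) :
    unitSphereArea d * ENNReal.ofReal (c * (Real.log (1 / r))⁻¹) ≤ m2 d j r :=
  m2_logProfile hd hc hr0 hr1 ▸ m2_mono hj

theorem m2_le (hd : 1 ≤ d) {j : ℝ → ℝ} {c r : ℝ} (hc : 0 ≤ c) (hr0 : 0 < r) (hr1 : r < 1)
    (hj : ∀ t ∈ Ioo 0 r, j t ≤ logProfile d c t) :
    m2 d j r ≤ unitSphereArea d * ENNReal.ofReal (c * (Real.log (1 / r))⁻¹) :=
  m2_logProfile hd hc hr0 hr1 ▸ m2_mono hj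

theorem setLIntegral_annulus_logProfile (hd : 1 ≤ d) {c r ρ : ℝ} (hc : 0 ≤ c) (hr : 0 < r) :
    ∫⁻ x in ((‖·‖) ⁻¹' Ico r ρ : Set (EuclideanSpace ℝ (Fin d))),
        ENNReal.ofReal (logProfile d c ‖x‖)
      = unitSphereArea d * (ENNReal.ofReal c *
          ∫⁻ y in Ioc r ρ, ENNReal.ofReal ((y ^ 3 * Real.log y ^ 2)⁻¹)) := by
  have hdensity : EqOn
      (fun y ↦ ENNReal.ofReal (y ^ (d - 1)) * ENNReal.ofReal (logProfile d c y))
      (fun y ↦ ENNReal.ofReal c * ENNReal.ofReal ((y ^ 3 * Real.log y ^ 2)⁻¹)) (Ico r ρ) := by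
    intro y hy
    dsimp only
    rw [← ENNReal.ofReal_mul (pow_nonneg (hr.le.trans hy.1) _), ← ENNReal.ofReal_mul hc,
      pow_mul_logProfile hd c (hr.trans_le hy.1)]
  rw [setLIntegral_norm_preimage_euclideanSpace hd
      (f := fun t ↦ ENNReal.ofReal (logProfile d c t)) (by fun_prop) measurableSet_Ico,
    inter_eq_left.2 fun y (hy : y ∈ Ico r ρ) ↦ mem_Ioi.2 (hr.trans_le hy.1),
    setLIntegral_congr_fun measurableSet_Ico hdensity, lintegral_const_mul _ (by fun_prop),
    Measure.restrict_congr_set Ico_ae_eq_Ioc]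

theorem setLIntegral_annulus_logProfile_le (hd : 1 ≤ d) {c r ρ : ℝ} (hc : 0 ≤ c) (hr : 0 < r)
    (hrρ : r ≤ ρ) (hρ : ρ ≤ Real.exp (-2)) :
    ∫⁻ x in ((‖·‖) ⁻¹' Ico r ρ : Set (EuclideanSpace ℝ (Fin d))),
        ENNReal.ofReal (logProfile d c ‖x‖)
      ≤ unitSphereArea d * ENNReal.ofReal (c * (r ^ 2)⁻¹ * (Real.log (1 / r) ^ 2)⁻¹) := by
  rw [setLIntegral_annulus_logProfile hd hc hr, mul_assoc c, ENNReal.ofReal_mul hc, one_div,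
    Real.log_inv, neg_sq, ← mul_inv, ← mul_pow]
  gcongr
  exact lintegral_Ioc_inv_pow_three_mul_log_sq_le hr hrρ hρ

theorem le_setLIntegral_annulus_logProfile (hd : 1 ≤ d) {c r : ℝ} (hc : 0 ≤ c) (hr : 0 < r)
    (hr1 : 2 * r < 1) :
    unitSphereArea d * ENNReal.ofReal (c / 8 * (r ^ 2)⁻¹ * (Real.log (1 / r) ^ 2)⁻¹)
      ≤ ∫⁻ x in ((‖·‖) ⁻¹' Ico r (2 * r) : Set (EuclideanSpace ℝ (Fin d))),
          ENNReal.ofReal (logProfile d c ‖x‖) := by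
  have hlog : Real.log r ≠ 0 := (Real.log_neg hr (by linarith)).ne
  have hconst : c / 8 * (r ^ 2)⁻¹ * (Real.log (1 / r) ^ 2)⁻¹
      = c * (((2 * r) ^ 3 * Real.log r ^ 2)⁻¹ * r) := by
    rw [one_div, Real.log_inv, neg_sq]
    field_simp
    ring
  rw [setLIntegral_annulus_logProfile hd hc hr, hconst, ENNReal.ofReal_mul hc]
  gcongr
  exact le_lintegral_Ioc_inv_pow_three_mul_log_sq hr hr1

theorem le_tailLam (hd : 1 ≤ d) {j : ℝ → ℝ} {c r : ℝ} (hc : 0 ≤ c) (hr : 0 < r)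
    (hr1 : 2 * r < 1) (hj : ∀ t ∈ Ico r (2 * r), logProfile d c t ≤ j t) :
    unitSphereArea d * ENNReal.ofReal (c / 8 * (r ^ 2)⁻¹ * (Real.log (1 / r) ^ 2)⁻¹)
      ≤ tailLam d j r :=
  calc _ ≤ ∫⁻ x in ((‖·‖) ⁻¹' Ico r (2 * r) : Set (EuclideanSpace ℝ (Fin d))),
          ENNReal.ofReal (logProfile d c ‖x‖) := le_setLIntegral_annulus_logProfile hd hc hr hr1
    _ ≤ ∫⁻ x in ((‖·‖) ⁻¹' Ico r (2 * r) : Set (EuclideanSpace ℝ (Fin d))),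
          ENNReal.ofReal (j ‖x‖) :=
        setLIntegral_mono' (measurable_norm measurableSet_Ico) fun x hx ↦
          ENNReal.ofReal_le_ofReal (hj _ hx)
    _ ≤ tailLam d j r := lintegral_mono_set fun x hx ↦ by simpa using hx.1

theorem tailLam_le (hd : 1 ≤ d) {j : ℝ → ℝ} {c r ρ : ℝ} (hc : 0 ≤ c) (hr : 0 < r)
    (hrρ : r ≤ ρ) (hρ : ρ ≤ Real.exp (-2)) (hj : ∀ t ∈ Ico r ρ, j t ≤ logProfile d c t) :
    tailLam d j r
      ≤ unitSphereArea d * ENNReal.ofReal (c * (r ^ 2)⁻¹ * (Real.log (1 / r) ^ 2)⁻¹) +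
        ENNReal.ofReal (min 1 (ρ ^ 2))⁻¹ *
          ∫⁻ x : EuclideanSpace ℝ (Fin d), ENNReal.ofReal (min 1 (‖x‖ ^ 2) * j ‖x‖) := by
  have hsplit : (ball (0 : EuclideanSpace ℝ (Fin d)) r)ᶜ ⊆ (‖·‖) ⁻¹' Ico r ρ ∪ (ball 0 ρ)ᶜ := by
    intro x hx
    by_cases h : ‖x‖ < ρ <;> simp_all
  calc tailLam d j r
      ≤ (∫⁻ x in ((‖·‖) ⁻¹' Ico r ρ : Set (EuclideanSpace ℝ (Fin d))),
            ENNReal.ofReal (j ‖x‖)) +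
          ∫⁻ x in (ball (0 : EuclideanSpace ℝ (Fin d)) ρ)ᶜ, ENNReal.ofReal (j ‖x‖) :=
        (lintegral_mono_set hsplit).trans (lintegral_union_le _ _ _)
    _ ≤ (∫⁻ x in ((‖·‖) ⁻¹' Ico r ρ : Set (EuclideanSpace ℝ (Fin d))),
            ENNReal.ofReal (logProfile d c ‖x‖)) +
          ENNReal.ofReal (min 1 (ρ ^ 2))⁻¹ *
            ∫⁻ x : EuclideanSpace ℝ (Fin d), ENNReal.ofReal (min 1 (‖x‖ ^ 2) * j ‖x‖) := by
        gcongr ?_ + ?_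
        · exact setLIntegral_mono' (measurable_norm measurableSet_Ico) fun x hx ↦
            ENNReal.ofReal_le_ofReal (hj _ hx)
        · exact setLIntegral_compl_ball_le_lintegral_min _ _ (hr.trans_le hrρ)
    _ ≤ _ := by
        gcongr
        exact setLIntegral_annulus_logProfile_le hd hc hr hrρ hρ

end Radial

theorem stmt15_general (d : ℕ) (hd : 1 ≤ d) (j : ℝ → ℝ)
    (hLK : (∫⁻ x : EuclideanSpace ℝ (Fin d),
      ENNReal.ofReal (min 1 (‖x‖ ^ 2) * j ‖x‖)) < ⊤)
    (δ c₁ c₂ : ℝ) (hδ0 : 0 < δ) (hc₁ : 0 < c₁) (hc : c₁ ≤ c₂)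
    (hjbound : ∀ r : ℝ, 0 < r → r ≤ δ →
      c₁ * (r ^ (d + 2))⁻¹ * (Real.log (1 / r) ^ 2)⁻¹ ≤ j r ∧
      j r ≤ c₂ * (r ^ (d + 2))⁻¹ * (Real.log (1 / r) ^ 2)⁻¹) :
    ∃ a₁ a₂ b₁ b₂ r₀ : ℝ, 0 < a₁ ∧ a₁ ≤ a₂ ∧ 0 < b₁ ∧ b₁ ≤ b₂ ∧ 0 < r₀ ∧ r₀ < δ ∧
      ∀ r : ℝ, 0 < r → r ≤ r₀ →
        (ENNReal.ofReal (a₁ * (Real.log (1 / r))⁻¹) ≤ m2 d j r ∧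
          m2 d j r ≤ ENNReal.ofReal (a₂ * (Real.log (1 / r))⁻¹)) ∧
        (ENNReal.ofReal (b₁ * (r ^ 2)⁻¹ * (Real.log (1 / r) ^ 2)⁻¹) ≤ tailLam d j r ∧
          tailLam d j r ≤ ENNReal.ofReal (b₂ * (r ^ 2)⁻¹ * (Real.log (1 / r) ^ 2)⁻¹)) := by
  set ρ := min δ (Real.exp (-2))
  have hρ0 : 0 < ρ := lt_min hδ0 (Real.exp_pos _)
  have hρ1 : ρ < 1 := (min_le_right _ _).trans_lt (Real.exp_lt_one_iff.2 (by norm_num))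
  have hj {t : ℝ} (ht : t ∈ Ioc 0 ρ) := hjbound t ht.1 (ht.2.trans (min_le_left _ _))
  have hc₂ : 0 ≤ c₂ := hc₁.le.trans hc
  set K := (unitSphereArea d).toReal
  have hK0 : 0 < K := ENNReal.toReal_pos (unitSphereArea_ne_zero hd) unitSphereArea_ne_top
  have hK (x : ℝ) : unitSphereArea d * ENNReal.ofReal x = ENNReal.ofReal (K * x) := by
    rw [ENNReal.ofReal_mul hK0.le, ENNReal.ofReal_toReal unitSphereArea_ne_top]
  set M := ENNReal.ofReal (min 1 (ρ ^ 2))⁻¹ * ∫⁻ x : EuclideanSpace ℝ (Fin d),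
    ENNReal.ofReal (min 1 (‖x‖ ^ 2) * j ‖x‖)
  have hM : M = ENNReal.ofReal M.toReal :=
    (ENNReal.ofReal_toReal (ENNReal.mul_ne_top ENNReal.ofReal_ne_top hLK.ne)).symm
  have hM0 : 0 ≤ M.toReal := ENNReal.toReal_nonneg
  refine ⟨K * c₁, K * c₂, K * (c₁ / 8), K * c₂ + M.toReal, ρ / 2, by positivity, by gcongr,
    by positivity, by nlinarith, by positivity, by linarith [min_le_left δ (Real.exp (-2))],
    fun r hr hrρ ↦ ⟨⟨?_, ?_⟩, ?_, ?_⟩⟩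
  · rw [mul_assoc, ← hK]
    exact le_m2 hd hc₁.le hr (by linarith) fun t ht ↦ (hj ⟨ht.1, by linarith [ht.2]⟩).1
  · rw [mul_assoc, ← hK]
    exact m2_le hd hc₂ hr (by linarith) fun t ht ↦ (hj ⟨ht.1, by linarith [ht.2]⟩).2
  · rw [mul_assoc K, mul_assoc K, ← hK]
    exact le_tailLam hd hc₁.le hr (by linarith)
      fun t ht ↦ (hj ⟨hr.trans_le ht.1, by linarith [ht.2]⟩).1
  · have hG := one_le_inv_sq_mul_inv_log_sq hr (by linarith)
    calc tailLam d j r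
        ≤ ENNReal.ofReal (K * (c₂ * (r ^ 2)⁻¹ * (Real.log (1 / r) ^ 2)⁻¹) + M.toReal) := by
          rw [ENNReal.ofReal_add (by positivity) hM0, ← hK, ← hM]
          exact tailLam_le hd hc₂ hr (by linarith) (min_le_right _ _)
            fun t ht ↦ (hj ⟨hr.trans_le ht.1, ht.2.le⟩).2
      _ ≤ _ := ENNReal.ofReal_le_ofReal (by nlinarith)

theorem stmt15 (d : ℕ) (hd : 1 ≤ d) (j : ℝ → ℝ)
    (hnonneg : ∀ r : ℝ, 0 < r → 0 ≤ j r)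
    (hmono : AntitoneOn j (Set.Ioi (0 : ℝ)))
    (hLK : (∫⁻ x : EuclideanSpace ℝ (Fin d),
      ENNReal.ofReal (min 1 (‖x‖ ^ 2) * j ‖x‖)) < ⊤)
    (δ c₁ c₂ : ℝ) (hδ0 : 0 < δ) (hδ1 : δ < 1) (hc₁ : 0 < c₁) (hc : c₁ ≤ c₂)
    (hjbound : ∀ r : ℝ, 0 < r → r ≤ δ →
      c₁ * (r ^ (d + 2))⁻¹ * (Real.log (1 / r) ^ 2)⁻¹ ≤ j r ∧
      j r ≤ c₂ * (r ^ (d + 2))⁻¹ * (Real.log (1 / r) ^ 2)⁻¹) :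
    ∃ a₁ a₂ b₁ b₂ r₀ : ℝ, 0 < a₁ ∧ a₁ ≤ a₂ ∧ 0 < b₁ ∧ b₁ ≤ b₂ ∧ 0 < r₀ ∧ r₀ < δ ∧
      ∀ r : ℝ, 0 < r → r ≤ r₀ →
        (ENNReal.ofReal (a₁ * (Real.log (1 / r))⁻¹) ≤ m2 d j r ∧
          m2 d j r ≤ ENNReal.ofReal (a₂ * (Real.log (1 / r))⁻¹)) ∧
        (ENNReal.ofReal (b₁ * (r ^ 2)⁻¹ * (Real.log (1 / r) ^ 2)⁻¹) ≤ tailLam d j r ∧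
          tailLam d j r ≤ ENNReal.ofReal (b₂ * (r ^ 2)⁻¹ * (Real.log (1 / r) ^ 2)⁻¹)) :=
  stmt15_general d hd j hLK δ c₁ c₂ hδ0 hc₁ hc hjbound
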